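/- The Hecke algebra operators satisfy the braid relation T_i T_{i+1} T_i = T_{i+1} T_i T_{i+1} as operators on polynomials in x_1, ..., x_n over Q(t_1, t_2). -/

import Mathlib

/-! Pass to the fraction field `L` of the polynomial ring. There every swap `s_i` extends to a
field automorphism and `π_i` becomes the explicit operator `g ↦ (x_i g - x_{i+1} g^{s_i}) /
(x_i - x_{i+1})`, so `T_i = α_i + β_i s_i` with `α_i, β_i ∈ L`. Using only `s_i² = 1` and
`s_i s_{i+1} s_i = s_{i+1} s_i s_{i+1}`, both sides of the braid relation become combinations of
the six conjugates `f^w`, `w ∈ ⟨s_i, s_{i+1}⟩`, and comparing coefficients is an identity of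
rational functions in `x_i, x_{i+1}, x_{i+2}, t₁, t₂`. -/

open MvPolynomial

noncomputable section

/-- The field `ℚ(t₁, t₂)`. -/
abbrev Fqt : Type := FractionRing (MvPolynomial (Fin 2) ℚ)

/-- The parameter `t₁` of the Hecke algebra. -/
def t1 : Fqt := algebraMap (MvPolynomial (Fin 2) ℚ) Fqt (X 0)

/-- The parameter `t₂` of the Hecke algebra. -/
def t2 : Fqt := algebraMap (MvPolynomial (Fin 2) ℚ) Fqt (X 1)

section HeckeOperator

variable {L : Type*} [Field L]

def isobaricDivDiff (s : L →+* L) (a b g : L) : L := (a * g - b * s g) / (a - b)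

/-- With `u = t₁ + t₂` and `v = t₂` this is the paper's `T_i`. -/
def heckeOp (s : L →+* L) (a b u v g : L) : L := u * isobaricDivDiff s a b g - v * s g

theorem heckeOp_braid {s r : L →+* L} {a b c u v : L}
    (hss : ∀ x, s (s x) = x) (hrr : ∀ x, r (r x) = x) (hsrs : ∀ x, s (r (s x)) = r (s (r x)))
    (hsa : s a = b) (hsb : s b = a) (hsc : s c = c) (hra : r a = a) (hrb : r b = c) (hrc : r c = b)
    (hsu : s u = u) (hsv : s v = v) (hru : r u = u) (hrv : r v = v)
    (hab : a ≠ b) (hbc : b ≠ c) (hac : a ≠ c) (x : L) :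
    heckeOp s a b u v (heckeOp r b c u v (heckeOp s a b u v x)) =
      heckeOp r b c u v (heckeOp s a b u v (heckeOp r b c u v x)) := by
  have := sub_ne_zero.2 hab
  have := sub_ne_zero.2 hbc
  have := sub_ne_zero.2 hac
  have := sub_ne_zero.2 hab.symm
  have := sub_ne_zero.2 hbc.symm
  have := sub_ne_zero.2 hac.symm
  simp only [heckeOp, isobaricDivDiff, map_sub, map_mul, map_div₀, hss, hrr, hsrs,
    hsa, hsb, hsc, hra, hrb, hrc, hsu, hsv, hru, hrv]
  field_simp
  ring

variable {R : Type*} [CommRing R] (φ : R →+* L) {s : R → R} {s' : L →+* L}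

theorem map_eq_isobaricDivDiff (hs : ∀ g, s' (φ g) = φ (s g)) {a b p g : R}
    (hab : φ a ≠ φ b) (h : (a - b) * p = a * g - b * s g) :
    φ p = isobaricDivDiff s' (φ a) (φ b) (φ g) := by
  rw [isobaricDivDiff, eq_div_iff (sub_ne_zero.2 hab), hs, mul_comm, ← map_sub, ← map_mul, h]
  simp only [map_sub, map_mul]

theorem map_eq_heckeOp (hs : ∀ g, s' (φ g) = φ (s g)) {a b p g : R} (hab : φ a ≠ φ b)
    (h : (a - b) * p = a * g - b * s g) (u v : R) :
    φ (u * p - v * s g) = heckeOp s' (φ a) (φ b) (φ u) (φ v) (φ g) := by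
  rw [heckeOp, ← map_eq_isobaricDivDiff φ hs hab h, hs, map_sub, map_mul, map_mul]

end HeckeOperator

section RenameFrac

variable {σ K : Type*} [CommRing K]

local notation "Frac" => FractionRing (MvPolynomial σ K)

variable (K) in
def renameFrac (e : Equiv.Perm σ) : Frac ≃+* Frac :=
  IsFractionRing.ringEquivOfRingEquiv (renameEquiv K e).toRingEquiv

theorem renameFrac_algebraMap (e : Equiv.Perm σ) (p : MvPolynomial σ K) :
    renameFrac K e (algebraMap _ Frac p) = algebraMap _ Frac (rename e p) :=
  IsFractionRing.ringEquivOfRingEquiv_algebraMap _ p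

theorem renameFrac_mul_apply (e e' : Equiv.Perm σ) (x : Frac) :
    renameFrac K (e * e') x = renameFrac K e (renameFrac K e' x) := by
  have : (renameFrac K (e * e') : Frac →+* Frac) = (renameFrac K e : Frac →+* Frac).comp
      (renameFrac K e') :=
    IsLocalization.ringHom_ext (nonZeroDivisors (MvPolynomial σ K)) <| RingHom.ext fun p => by
      simp [renameFrac_algebraMap, rename_rename]
  exact RingHom.congr_fun this x

theorem renameFrac_one_apply (x : Frac) : renameFrac K (1 : Equiv.Perm σ) x = x := by
  have : (renameFrac K (1 : Equiv.Perm σ) : Frac →+* Frac) = RingHom.id _ :=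
    IsLocalization.ringHom_ext (nonZeroDivisors (MvPolynomial σ K)) <| RingHom.ext fun p => by
      simp [renameFrac_algebraMap]
  exact RingHom.congr_fun this x

variable [DecidableEq σ]

theorem renameFrac_swap_swap_apply (a b : σ) (x : Frac) :
    renameFrac K (Equiv.swap a b) (renameFrac K (Equiv.swap a b) x) = x := by
  rw [← renameFrac_mul_apply, Equiv.swap_mul_self, renameFrac_one_apply]

theorem renameFrac_swap_braid_apply {a b c : σ} (hab : a ≠ b) (hbc : b ≠ c) (hac : a ≠ c)
    (x : Frac) :
    renameFrac K (Equiv.swap a b)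
        (renameFrac K (Equiv.swap b c) (renameFrac K (Equiv.swap a b) x)) =
      renameFrac K (Equiv.swap b c)
        (renameFrac K (Equiv.swap a b) (renameFrac K (Equiv.swap b c) x)) := by
  have hswap : Equiv.swap a b * Equiv.swap b c * Equiv.swap a b =
      Equiv.swap b c * Equiv.swap a b * Equiv.swap b c := by
    rw [Equiv.swap_mul_swap_mul_swap hab hac, Equiv.swap_comm a b, Equiv.swap_comm b c,
      Equiv.swap_mul_swap_mul_swap hbc.symm hac.symm, Equiv.swap_comm]
  simp only [← renameFrac_mul_apply, ← mul_assoc, hswap]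

end RenameFrac

/-- The Hecke operators `T_i := π_i (t₁ + t₂) - s_i t₂` satisfy the braid relation
`T_i T_{i+1} T_i = T_{i+1} T_i T_{i+1}` on polynomials in `n` variables over `ℚ(t₁, t₂)`. -/
theorem hecke_braid_relation (n : ℕ) (i : ℕ) (h : i + 2 < n)
    (P P' : MvPolynomial (Fin n) Fqt → MvPolynomial (Fin n) Fqt)
    (hP : ∀ f, (X ⟨i, by omega⟩ - X ⟨i + 1, by omega⟩) * P f =
      X ⟨i, by omega⟩ * f -
        X ⟨i + 1, by omega⟩ *
          rename ⇑(Equiv.swap (⟨i, by omega⟩ : Fin n) ⟨i + 1, by omega⟩) f)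
    (hP' : ∀ f, (X ⟨i + 1, by omega⟩ - X ⟨i + 2, h⟩) * P' f =
      X ⟨i + 1, by omega⟩ * f -
        X ⟨i + 2, h⟩ *
          rename ⇑(Equiv.swap (⟨i + 1, by omega⟩ : Fin n) ⟨i + 2, h⟩) f) :
    let T : MvPolynomial (Fin n) Fqt → MvPolynomial (Fin n) Fqt := fun f =>
      C (t1 + t2) * P f -
        C t2 * rename ⇑(Equiv.swap (⟨i, by omega⟩ : Fin n) ⟨i + 1, by omega⟩) f
    let T' : MvPolynomial (Fin n) Fqt → MvPolynomial (Fin n) Fqt := fun f =>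
      C (t1 + t2) * P' f -
        C t2 * rename ⇑(Equiv.swap (⟨i + 1, by omega⟩ : Fin n) ⟨i + 2, h⟩) f
    ∀ f, T (T' (T f)) = T' (T (T' f)) := by
  intro T T' f
  set a : Fin n := ⟨i, by omega⟩
  set b : Fin n := ⟨i + 1, by omega⟩
  set c : Fin n := ⟨i + 2, h⟩
  have hab : a ≠ b := by simp [a, b, Fin.ext_iff]
  have hbc : b ≠ c := by simp [b, c, Fin.ext_iff]
  have hac : a ≠ c := by simp [a, c, Fin.ext_iff]
  let φ := algebraMap (MvPolynomial (Fin n) Fqt) (FractionRing (MvPolynomial (Fin n) Fqt))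
  have hφ : Function.Injective φ := IsFractionRing.injective _ _
  have hφX {j k : Fin n} (hjk : j ≠ k) : φ (X j) ≠ φ (X k) := hφ.ne (X_injective.ne hjk)
  let s := (renameFrac Fqt (Equiv.swap a b)).toRingHom
  let r := (renameFrac Fqt (Equiv.swap b c)).toRingHom
  have hT g : φ (T g) = heckeOp s (φ (X a)) (φ (X b)) (φ (C (t1 + t2))) (φ (C t2)) (φ g) :=
    map_eq_heckeOp φ (renameFrac_algebraMap _) (hφX hab) (hP g) _ _
  have hT' g : φ (T' g) = heckeOp r (φ (X b)) (φ (X c)) (φ (C (t1 + t2))) (φ (C t2)) (φ g) :=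
    map_eq_heckeOp φ (renameFrac_algebraMap _) (hφX hbc) (hP' g) _ _
  apply hφ
  rw [hT, hT', hT, hT', hT, hT']
  refine heckeOp_braid (renameFrac_swap_swap_apply _ _) (renameFrac_swap_swap_apply _ _)
    (renameFrac_swap_braid_apply hab hbc hac) ?_ ?_ ?_ ?_ ?_ ?_ ?_ ?_ ?_ ?_ (hφX hab) (hφX hbc)
    (hφX hac) _ <;>
  simp [s, r, φ, renameFrac_algebraMap, Equiv.swap_apply_of_ne_of_ne, hab, hac, hbc.symm, hac.symm]

end
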